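/- Let R₀ ≥ 1 and let v : ℝ² → ℝ be twice continuously differentiable on {x : |x| ≥ R₀} with v(x) → 0 as |x| → ∞. Suppose there is a constant C₁ > 0 such that for every R ≥ R₀, sup_{|x| ≥ R} |Δv(x) − v(x)| ≤ C₁ (sup_{|x| ≥ R} |v(x)|)². Then there exist constants m > 0 and C > 0 such that |v(x)| ≤ C e^{−m|x|} for all |x| ≥ R₀. -/

import Mathlib

/-!
On `{|x| ≥ R}` put `S = sup_{|y| ≥ R} |v y|` and `ε = C₁ S²`, so that `|Δv - v| ≤ ε` there. For a
unit vector `e`, the function `ψ = S e^{R - ⟪e, x⟫} + ε` satisfies `Δψ = ψ - ε` and dominates `±v` on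
the sphere `|x| = R`; as `v → 0` at infinity, the maximum principle gives `±v ≤ ψ` on all of
`{|x| ≥ R}`. Taking `e = x / |x|` yields `sup_{|x| ≥ R + 2} |v| ≤ S (e^{-2} + C₁ S)`, so once
`C₁ S ≤ 1/4` the tail supremum halves every time `R` grows by `2`, which is exponential decay.
-/

open Filter

noncomputable def lap2 (f : EuclideanSpace ℝ (Fin 2) → ℝ) (x : EuclideanSpace ℝ (Fin 2)) : ℝ :=
  ∑ i : Fin 2, iteratedFDeriv ℝ 2 f x ![EuclideanSpace.single i 1, EuclideanSpace.single i 1]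

open Set Real Topology Laplacian InnerProductSpace Bornology
open scoped RealInnerProductSpace

theorem IsLocalMax.deriv_deriv_nonpos {g : ℝ → ℝ} {a : ℝ} (h : IsLocalMax g a)
    (hg : ContinuousAt g a) : deriv (deriv g) a ≤ 0 := by
  by_contra! hpos
  have hconst : g =ᶠ[𝓝 a] fun _ => g a :=
    (h.and (isLocalMin_of_deriv_deriv_pos hpos h.deriv_eq_zero hg)).mono
      fun y hy => le_antisymm hy.1 hy.2
  have : deriv g =ᶠ[𝓝 a] fun _ => 0 := by simpa using hconst.deriv
  simp [this.deriv_eq] at hpos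

theorem ContDiffAt.iteratedFDeriv_two_apply_eq_deriv_deriv {E : Type*} [NormedAddCommGroup E]
    [NormedSpace ℝ E] {f : E → ℝ} {x : E} (hf : ContDiffAt ℝ 2 f x) (e : E) :
    iteratedFDeriv ℝ 2 f x ![e, e] = deriv (deriv fun s : ℝ => f (x + s • e)) 0 := by
  have hline (s : ℝ) : HasDerivAt (fun s : ℝ => x + s • e) e s := by
    simpa using ((hasDerivAt_id s).smul_const e).const_add x
  have hnear : ∀ᶠ s : ℝ in 𝓝 0, DifferentiableAt ℝ f (x + s • e) := by
    have hcont : Tendsto (fun s : ℝ => x + s • e) (𝓝 0) (𝓝 x) := by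
      simpa using (hline 0).continuousAt.tendsto
    exact hcont.eventually ((hf.eventually (by simp)).mono fun y hy =>
      hy.differentiableAt (by norm_num))
  have hfirst : deriv (fun s : ℝ => f (x + s • e)) =ᶠ[𝓝 0] fun s => fderiv ℝ f (x + s • e) e :=
    hnear.mono fun s hs => (hs.hasFDerivAt.comp_hasDerivAt s (hline s)).deriv
  have hf' : DifferentiableAt ℝ (fderiv ℝ f) x :=
    (hf.fderiv_right (m := 1) (by norm_num)).differentiableAt (by norm_num)
  have hsecond : HasDerivAt (fun s : ℝ => fderiv ℝ f (x + s • e) e)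
      (fderiv ℝ (fderiv ℝ f) x e e) 0 := by
    have := hf'.hasFDerivAt.comp_hasDerivAt_of_eq 0 (hline 0) (by simp)
    simpa using this.clm_apply (hasDerivAt_const 0 e)
  rw [hfirst.deriv_eq, hsecond.deriv, iteratedFDeriv_two_apply]
  simp

theorem exists_isLocalMax_of_cocompact {X : Type*} [TopologicalSpace X] {K U : Set X}
    {w : X → ℝ} {x : X} (hK : IsClosed K) (hU : IsOpen U) (hUK : U ⊆ K) (hw : ContinuousOn w K)
    (hx : x ∈ K) (hbdry : ∀ y ∈ K \ U, w y < w x) (hinf : ∀ᶠ y in cocompact X, w y < w x) :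
    ∃ x₀ ∈ U, w x ≤ w x₀ ∧ IsLocalMax w x₀ := by
  obtain ⟨C, hC, hCw⟩ := mem_cocompact.1 hinf
  have hsub : K ∩ w ⁻¹' Ici (w x) ⊆ C := fun y hy => by
    by_contra hyC
    exact (hCw hyC).not_ge (mem_preimage.1 hy.2)
  have hcpt : IsCompact (K ∩ w ⁻¹' Ici (w x)) :=
    hC.of_isClosed_subset (hw.preimage_isClosed_of_isClosed hK isClosed_Ici) hsub
  obtain ⟨x₀, ⟨hx₀K, hx₀x⟩, hmax⟩ :=
    hcpt.exists_isMaxOn ⟨x, hx, mem_preimage.2 self_mem_Ici⟩ (hw.mono inter_subset_left)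
  have hmaxK : IsMaxOn w K x₀ := fun y hy => by
    by_cases hyx : w x ≤ w y
    · exact hmax ⟨hy, hyx⟩
    · exact (not_le.1 hyx).le.trans hx₀x
  have hx₀U : x₀ ∈ U := by
    by_contra hx₀U
    exact (hbdry x₀ ⟨hx₀K, hx₀U⟩).not_ge hx₀x
  exact ⟨x₀, hx₀U, hx₀x, hmaxK.isLocalMax (mem_of_superset (hU.mem_nhds hx₀U) hUK)⟩

section TailSup

variable {E : Type*} [NormedAddCommGroup E]

noncomputable def tailSup (f : E → ℝ) (R : ℝ) : ℝ :=
  sSup ((fun y => |f y|) '' {y | R ≤ ‖y‖})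

variable {f : E → ℝ} {R M : ℝ}

theorem tailSup_nonneg : 0 ≤ tailSup f R :=
  Real.sSup_nonneg <| forall_mem_image.2 fun _ _ => abs_nonneg _

theorem tailSup_le (h : ∀ y, R ≤ ‖y‖ → |f y| ≤ M) (hM : 0 ≤ M) : tailSup f R ≤ M :=
  Real.sSup_le (forall_mem_image.2 h) hM

theorem exists_abs_le_of_tendsto_cobounded (hlim : Tendsto f (cobounded E) (𝓝 0)) {δ : ℝ}
    (hδ : 0 < δ) : ∃ T, ∀ y, T ≤ ‖y‖ → |f y| ≤ δ := by
  have h := hlim.eventually (Metric.closedBall_mem_nhds 0 hδ)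
  rw [← comap_norm_atTop, eventually_comap, eventually_atTop] at h
  obtain ⟨T, hT⟩ := h
  exact ⟨T, fun y hy => by simpa using hT ‖y‖ hy y rfl⟩

theorem tendsto_tailSup_atTop (hlim : Tendsto f (cobounded E) (𝓝 0)) :
    Tendsto (tailSup f) atTop (𝓝 0) := by
  refine tendsto_order.2 ⟨fun a ha => Eventually.of_forall fun R => ha.trans_le tailSup_nonneg,
    fun δ hδ => ?_⟩
  obtain ⟨T, hT⟩ := exists_abs_le_of_tendsto_cobounded hlim (half_pos hδ)
  filter_upwards [eventually_ge_atTop T] with R hR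
  exact (tailSup_le (fun y hy => hT y (hR.trans hy)) (half_pos hδ).le).trans_lt (half_lt_self hδ)

variable [ProperSpace E]

theorem bddAbove_abs_image_tail (hcont : ContinuousOn f {y | R ≤ ‖y‖})
    (hlim : Tendsto f (cobounded E) (𝓝 0)) : BddAbove ((fun y => |f y|) '' {y | R ≤ ‖y‖}) := by
  obtain ⟨T, hT⟩ := exists_abs_le_of_tendsto_cobounded hlim one_pos
  have hK : IsCompact ({y : E | R ≤ ‖y‖} ∩ Metric.closedBall 0 T) :=
    (isCompact_closedBall 0 T).inter_left (isClosed_le continuous_const continuous_norm)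
  obtain ⟨M, hM⟩ := hK.bddAbove_image (hcont.abs.mono inter_subset_left)
  refine ⟨max M 1, forall_mem_image.2 fun y hy => ?_⟩
  by_cases hyT : ‖y‖ ≤ T
  · exact (hM ⟨y, ⟨hy, by simpa using hyT⟩, rfl⟩).trans (le_max_left _ _)
  · exact (hT y (not_le.1 hyT).le).trans (le_max_right _ _)

theorem abs_le_tailSup (hcont : ContinuousOn f {y | R ≤ ‖y‖})
    (hlim : Tendsto f (cobounded E) (𝓝 0)) {y : E} (hy : R ≤ ‖y‖) : |f y| ≤ tailSup f R :=
  le_csSup (bddAbove_abs_image_tail hcont hlim) ⟨y, hy, rfl⟩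

theorem tailSup_antitoneOn {R₀ : ℝ} (hcont : ContinuousOn f {y | R₀ ≤ ‖y‖})
    (hlim : Tendsto f (cobounded E) (𝓝 0)) : AntitoneOn (tailSup f) (Ici R₀) := by
  intro r (hr : R₀ ≤ r) r' _ hrr'
  have hcont_r : ContinuousOn f {y | r ≤ ‖y‖} := hcont.mono fun z (hz : r ≤ ‖z‖) => hr.trans hz
  exact tailSup_le (fun y hy => abs_le_tailSup hcont_r hlim (hrr'.trans hy)) tailSup_nonneg

end TailSup

section InnerProductSpace

variable {E : Type*} [NormedAddCommGroup E] [InnerProductSpace ℝ E] [FiniteDimensional ℝ E]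
  {u : E → ℝ} {R S ε : ℝ}

theorem IsLocalMax.laplacian_nonpos {f : E → ℝ} {x : E} (h : IsLocalMax f x)
    (hf : ContDiffAt ℝ 2 f x) : Δ f x ≤ 0 := by
  rw [laplacian_eq_iteratedFDeriv_stdOrthonormalBasis]
  refine Finset.sum_nonpos fun i _ => ?_
  set e := stdOrthonormalBasis ℝ E i
  rw [hf.iteratedFDeriv_two_apply_eq_deriv_deriv]
  have hline : ContinuousAt (fun s : ℝ => x + s • e) 0 := by fun_prop
  have hx : x + (0 : ℝ) • e = x := by simp
  have hmax : IsLocalMax f (x + (0 : ℝ) • e) := by rwa [hx]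
  exact (hmax.comp_continuous (g := fun s : ℝ => x + s • e) hline).deriv_deriv_nonpos
    (hf.continuousAt.comp_of_eq hline hx)

theorem laplacian_comp_inner {g : ℝ → ℝ} (hg : ContDiff ℝ 2 g) (e x : E) :
    Δ (fun y => g ⟪e, y⟫) x = ‖e‖ ^ 2 * iteratedDeriv 2 g ⟪e, x⟫ := by
  rw [laplacian_eq_iteratedFDeriv_stdOrthonormalBasis]
  have hcomp : (fun y => g ⟪e, y⟫) = g ∘ innerSL ℝ e := rfl
  simp only [hcomp, (innerSL ℝ e).iteratedFDeriv_comp_right hg _ le_rfl,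
    ContinuousMultilinearMap.compContinuousLinearMap_apply,
    iteratedFDeriv_apply_eq_iteratedDeriv_mul_prod]
  simp [Fin.prod_univ_two, ← Finset.sum_mul, ← sq, (stdOrthonormalBasis ℝ E).sum_sq_inner_left]

theorem laplacian_exp_inner {e : E} (he : ‖e‖ = 1) (S R ε : ℝ) (x : E) :
    Δ (fun y => S * exp (R - ⟪e, y⟫) + ε) x = S * exp (R - ⟪e, x⟫) := by
  have hexp (a t : ℝ) : HasDerivAt (fun t => a * exp (R - t)) (-(a * exp (R - t))) t := by
    simpa using ((hasDerivAt_id t).const_sub R).exp.const_mul a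
  have hd : deriv (fun t => S * exp (R - t) + ε) = fun t => -S * exp (R - t) := by
    ext t; simpa using ((hexp S t).add_const ε).deriv
  rw [laplacian_comp_inner (g := fun t => S * exp (R - t) + ε) (by fun_prop), he,
    iteratedDeriv_succ, iteratedDeriv_one, hd, (hexp (-S) _).deriv]
  ring

theorem le_exp_inner_of_sub_le_laplacian {e : E} (he : ‖e‖ = 1) (hS : 0 ≤ S) (hε : 0 ≤ ε)
    (hcont : ContinuousOn u {y | R ≤ ‖y‖}) (hdiff : ∀ y, R < ‖y‖ → ContDiffAt ℝ 2 u y)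
    (hlim : Tendsto u (cobounded E) (𝓝 0)) (hbdry : ∀ y, ‖y‖ = R → u y ≤ S)
    (hlap : ∀ y, R < ‖y‖ → u y - ε ≤ Δ u y) {x : E} (hx : R ≤ ‖x‖) :
    u x ≤ S * exp (R - ⟪e, x⟫) + ε := by
  set ψ : E → ℝ := fun y => S * exp (R - ⟪e, y⟫) + ε with hψ_def
  have hψε (y : E) : ε ≤ ψ y := le_add_of_nonneg_left (by positivity)
  have hψ : ContDiff ℝ 2 ψ :=
    (contDiff_const.mul (contDiff_exp.comp
      (contDiff_const.sub (contDiff_const.inner ℝ contDiff_id)))).add contDiff_const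
  by_contra! hux
  have hsphere : ∀ y ∈ {y | R ≤ ‖y‖} \ {y | R < ‖y‖}, (u - ψ) y < (u - ψ) x := by
    rintro y ⟨hy, hyU⟩
    have hyR : ‖y‖ = R := le_antisymm (not_lt.1 hyU) hy
    have hinner : ⟪e, y⟫ ≤ R := by simpa [he, hyR] using real_inner_le_norm e y
    have : S ≤ S * exp (R - ⟪e, y⟫) := le_mul_of_one_le_right hS (one_le_exp (by linarith))
    simp only [Pi.sub_apply, hψ_def]
    linarith [hbdry y hyR]
  have hinf : ∀ᶠ y in cocompact E, (u - ψ) y < (u - ψ) x := by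
    rw [← Metric.cobounded_eq_cocompact]
    filter_upwards [hlim.eventually (gt_mem_nhds (show 0 < ε + (u x - ψ x) by linarith))]
      with y hy
    simp only [Pi.sub_apply]
    linarith [hψε y]
  obtain ⟨x₀, hx₀, hle, hmax⟩ := exists_isLocalMax_of_cocompact
    (isClosed_le continuous_const continuous_norm) (isOpen_lt continuous_const continuous_norm)
    (fun y (hy : R < ‖y‖) => hy.le) (hcont.sub hψ.continuous.continuousOn) hx hsphere hinf
  have hΔ := hmax.laplacian_nonpos ((hdiff x₀ hx₀).sub hψ.contDiffAt)
  rw [(hdiff x₀ hx₀).laplacian_sub hψ.contDiffAt, hψ_def, laplacian_exp_inner he] at hΔ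
  simp only [Pi.sub_apply, hψ_def] at hle hΔ
  linarith [hlap x₀ hx₀]

theorem abs_le_exp_of_abs_laplacian_sub_le (hR : 0 < R) (hS : 0 ≤ S) (hε : 0 ≤ ε)
    (hcont : ContinuousOn u {y | R ≤ ‖y‖}) (hdiff : ∀ y, R < ‖y‖ → ContDiffAt ℝ 2 u y)
    (hlim : Tendsto u (cobounded E) (𝓝 0)) (hbdry : ∀ y, ‖y‖ = R → |u y| ≤ S)
    (hlap : ∀ y, R < ‖y‖ → |Δ u y - u y| ≤ ε) {x : E} (hx : R ≤ ‖x‖) :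
    |u x| ≤ S * exp (R - ‖x‖) + ε := by
  have hx0 : x ≠ 0 := norm_pos_iff.1 (hR.trans_le hx)
  set e := ‖x‖⁻¹ • x
  have he : ‖e‖ = 1 := norm_smul_inv_norm hx0
  have hex : ⟪e, x⟫ = ‖x‖ := by
    rw [real_inner_smul_left, real_inner_self_eq_norm_sq, sq, inv_mul_cancel_left₀ (by simpa)]
  rw [← hex, abs_le]
  constructor
  · have := le_exp_inner_of_sub_le_laplacian (u := -u) he hS hε hcont.neg
      (fun y hy => (hdiff y hy).neg) (neg_zero (G := ℝ) ▸ hlim.neg)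
      (fun y hy => (neg_le_abs _).trans (hbdry y hy))
      (fun y hy => by
        rw [laplacian_neg, Pi.neg_apply, Pi.neg_apply]; linarith [(abs_le.1 (hlap y hy)).2]) hx
    simp only [Pi.neg_apply] at this
    linarith
  · exact le_exp_inner_of_sub_le_laplacian he hS hε hcont hdiff hlim
      (fun y hy => (le_abs_self _).trans (hbdry y hy))
      (fun y hy => by linarith [(abs_le.1 (hlap y hy)).1]) hx

theorem tailSup_add_le {L C₁ : ℝ} (hR : 0 < R) (hL : 0 ≤ L) (hC₁ : 0 ≤ C₁)
    (hcont : ContinuousOn u {y | R ≤ ‖y‖}) (hdiff : ∀ y, R < ‖y‖ → ContDiffAt ℝ 2 u y)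
    (hlim : Tendsto u (cobounded E) (𝓝 0))
    (hquad : ∀ y, R < ‖y‖ → |Δ u y - u y| ≤ C₁ * tailSup u R ^ 2) :
    tailSup u (R + L) ≤ tailSup u R * (exp (-L) + C₁ * tailSup u R) := by
  have hS : 0 ≤ tailSup u R := tailSup_nonneg
  refine tailSup_le (fun y hy => ?_) (by positivity)
  have hexp : exp (R - ‖y‖) ≤ exp (-L) := exp_le_exp.2 (by linarith)
  calc |u y| ≤ tailSup u R * exp (R - ‖y‖) + C₁ * tailSup u R ^ 2 :=
        abs_le_exp_of_abs_laplacian_sub_le hR hS (by positivity) hcont hdiff hlim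
          (fun z hz => abs_le_tailSup hcont hlim hz.ge) hquad (by linarith)
    _ ≤ tailSup u R * (exp (-L) + C₁ * tailSup u R) := by nlinarith

end InnerProductSpace

section Halving

variable {f : ℝ → ℝ} {b L : ℝ}

theorem le_div_two_pow_of_halving (hhalf : ∀ t ≥ b, f (t + L) ≤ f t / 2) (hL : 0 ≤ L) (k : ℕ) :
    f (b + k * L) ≤ f b / 2 ^ k := by
  induction k with
  | zero => simp
  | succ k ih =>
    calc f (b + ↑(k + 1) * L) = f (b + k * L + L) := by push_cast; ring_nf
      _ ≤ f b / 2 ^ k / 2 := (hhalf _ (le_add_of_nonneg_right (by positivity))).trans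
          (by linarith)
      _ = f b / 2 ^ (k + 1) := by ring

theorem exists_exp_decay_of_halving {a : ℝ} (hL : 0 < L) (hab : a ≤ b) (hf0 : ∀ t, 0 ≤ f t)
    (hanti : AntitoneOn f (Ici a)) (hhalf : ∀ t ≥ b, f (t + L) ≤ f t / 2) :
    ∃ m > 0, ∃ C > 0, ∀ t ≥ a, f t ≤ C * exp (-m * t) := by
  set m := log 2 / L
  have hm : 0 < m := div_pos (log_pos one_lt_two) hL
  refine ⟨m, hm, 2 * (f a + 1) * exp (m * b), by have := hf0 a; positivity, fun t ht => ?_⟩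
  have hC : 2 * (f a + 1) * exp (m * b) * exp (-m * t) = 2 * (f a + 1) * exp (m * (b - t)) := by
    rw [mul_assoc, ← exp_add]; ring_nf
  rw [hC]
  rcases lt_or_ge t b with htb | htb
  · have : 1 ≤ exp (m * (b - t)) := one_le_exp (by nlinarith)
    nlinarith [hf0 a, hanti self_mem_Ici ht ht]
  · set k := ⌊(t - b) / L⌋₊
    have hk₁ : b + k * L ≤ t := by
      have := Nat.floor_le (div_nonneg (sub_nonneg.2 htb) hL.le)
      rwa [le_div_iff₀ hL, le_sub_iff_add_le'] at this
    have hk₂ : (t - b) / L < k + 1 := Nat.lt_floor_add_one _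
    -- `2 ^ (k + 1) ≥ 2 ^ ((t - b) / L) = exp (m * (t - b))` as `k + 1 > (t - b) / L`
    have hexp : 1 ≤ 2 ^ (k + 1) * exp (m * (b - t)) := by
      have hpow : (2 : ℝ) ^ (k + 1) = exp (log 2 * (k + 1)) := by
        rw [← rpow_def_of_pos two_pos]; norm_cast
      rw [hpow, ← exp_add]
      refine one_le_exp ?_
      have : m * (b - t) = -(log 2 * ((t - b) / L)) := by ring
      nlinarith [log_pos one_lt_two]
    calc f t ≤ f (b + k * L) :=
          hanti (hab.trans (le_add_of_nonneg_right (by positivity))) ht hk₁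
      _ ≤ f b / 2 ^ k := le_div_two_pow_of_halving hhalf hL.le k
      _ ≤ 2 * f b * exp (m * (b - t)) := by
          rw [div_le_iff₀ (by positivity)]
          have := mul_le_mul_of_nonneg_left hexp (hf0 b)
          rw [pow_succ] at this
          linarith
      _ ≤ 2 * (f a + 1) * exp (m * (b - t)) := by
          gcongr
          linarith [hanti self_mem_Ici (show b ∈ Ici a from hab) hab]

end Halving

theorem lap2_eq_laplacian (f : EuclideanSpace ℝ (Fin 2) → ℝ) : lap2 f = Δ f := by
  ext x
  simp [lap2, laplacian_eq_iteratedFDeriv_orthonormalBasis f (EuclideanSpace.basisFun (Fin 2) ℝ)]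

theorem exp_neg_two_le_quarter : exp (-2) ≤ 1 / 4 := by
  have h : 4 ≤ exp 2 := by
    have := add_one_le_exp 1
    calc (4 : ℝ) = 2 * 2 := by norm_num
      _ ≤ exp 1 * exp 1 := by gcongr <;> linarith
      _ = exp 2 := by rw [← exp_add]; norm_num
  rw [exp_neg, one_div]
  exact inv_anti₀ (by norm_num) h

/-- First decay step: a solution on an exterior region, tending to `0` at infinity, whose
error `Δv − v` is bounded by `C₁ · (sup |v|)²` on every exterior region `{|x| ≥ R}`,
decays at some exponential rate. -/
theorem stmt_3 (R₀ : ℝ) (hR₀ : 1 ≤ R₀) (v : EuclideanSpace ℝ (Fin 2) → ℝ)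
    (hC2 : ContDiffOn ℝ 2 v {x | R₀ ≤ ‖x‖})
    (hlim : Tendsto v (comap (fun x : EuclideanSpace ℝ (Fin 2) => ‖x‖) atTop) (nhds 0))
    (C₁ : ℝ) (hC₁ : 0 < C₁)
    (hquad : ∀ R, R₀ ≤ R → ∀ x, R ≤ ‖x‖ →
      |lap2 v x - v x| ≤ C₁ * (sSup ((fun y => |v y|) '' {y | R ≤ ‖y‖})) ^ 2) :
    ∃ m > (0:ℝ), ∃ C > (0:ℝ), ∀ x, R₀ ≤ ‖x‖ → |v x| ≤ C * Real.exp (-m * ‖x‖) := by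
  rw [comap_norm_atTop] at hlim
  rw [lap2_eq_laplacian] at hquad
  have hcont {R : ℝ} (hR : R₀ ≤ R) : ContinuousOn v {y | R ≤ ‖y‖} :=
    hC2.continuousOn.mono fun y (hy : R ≤ ‖y‖) => hR.trans hy
  have hdiff {R : ℝ} (hR : R₀ ≤ R) (y) (hy : R < ‖y‖) : ContDiffAt ℝ 2 v y :=
    hC2.contDiffAt <| mem_of_superset ((isOpen_lt continuous_const continuous_norm).mem_nhds
      (hR.trans_lt hy)) fun z (hz : R₀ < ‖z‖) => hz.le
  obtain ⟨R₁, hR₁⟩ := eventually_atTop.1 <| (eventually_ge_atTop R₀).and <|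
    ((tendsto_tailSup_atTop hlim).const_mul C₁).eventually (ge_mem_nhds (a := 1 / 4) (by simp))
  have hhalf : ∀ R ≥ R₁, tailSup v (R + 2) ≤ tailSup v R / 2 := fun R hR => by
    obtain ⟨hR₀R, hsmall⟩ := hR₁ R hR
    have hstep := tailSup_add_le (by linarith) zero_le_two hC₁.le (hcont hR₀R) (hdiff hR₀R) hlim
      fun y hy => hquad R hR₀R y hy.le
    nlinarith [exp_neg_two_le_quarter, tailSup_nonneg (f := v) (R := R)]
  obtain ⟨m, hm, C, hC, hdecay⟩ := exists_exp_decay_of_halving two_pos (hR₁ R₁ le_rfl).1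
    (fun _ => tailSup_nonneg) (tailSup_antitoneOn hC2.continuousOn hlim) hhalf
  exact ⟨m, hm, C, hC, fun x hx => (abs_le_tailSup (hcont hx) hlim le_rfl).trans (hdecay _ hx)⟩
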